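/- arXiv:2205.01379 — 2 statements merged into one kernel-verified Lean document; each statement's English description precedes it below -/
import Mathlib

section
/- Let (𝔛,Γ) be a topological local diffusion space satisfying (F) and (SC). Then for every infinite configuration γ ∈ Υ^(∞), every t ≥ 0, and any two labelings 𝐱₁, 𝐱₂ ∈ 𝔏^{-1}(γ), the pushforward measures coincide: 𝔏_♯(h^∞_t(𝐱₁,·)) = 𝔏_♯(h^∞_t(𝐱₂,·)) as measures on (Υ,𝒜_v(ℰ)). -/
open MeasureTheory Filter Set
open scoped ENNReal NNReal Topology Classical

noncomputable section

namespace Config2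

/-- Smooth bounded real functions on `ℝ^k` all of whose derivatives are bounded:
the class `C_b^∞(ℝ^k)` of outer functions for cylinder functions. -/
def SmoothCb {k : ℕ} (F : (Fin k → ℝ) → ℝ) : Prop :=
  ContDiff ℝ (⊤ : ℕ∞) F ∧ ∀ n : ℕ, ∃ C : ℝ, ∀ y, ‖iteratedFDeriv ℝ n F y‖ ≤ C

/-- `i`-th partial derivative of `F : ℝ^k → ℝ`. -/
def pderiv' {k : ℕ} (F : (Fin k → ℝ) → ℝ) (y : Fin k → ℝ) (i : Fin k) : ℝ :=
  fderiv ℝ F y (Pi.single i 1)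

/-- second partial derivatives of `G : ℝ^k → ℝ`. -/
def pderiv2 {k : ℕ} (G : (Fin k → ℝ) → ℝ) (y : Fin k → ℝ) (p q : Fin k) : ℝ :=
  fderiv ℝ (fun z => fderiv ℝ G z (Pi.single p 1)) y (Pi.single q 1)

variable (X : Type) [TopologicalSpace X] [MeasurableSpace X] [BorelSpace X]
  [TopologicalSpace.MetrizableSpace X] [SecondCountableTopology X]

/-- A topological local diffusion space (TLDS) over the separable metrizable (Luzin)
space `X`: a topological local structure `(X, 𝒯, 𝒜, m, ℰ)` together with a square field
operator `Γ` on a core `D0`, whose associated pre-Dirichlet form is closable with closure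
a (quasi-regular, strongly local) Dirichlet form `ℰform` with carré du champ `CdC`,
generator `L` and Markovian semigroup `T` on `L²(m)`. -/
structure TLDS where
  /-- the reference measure -/
  m : Measure X
  m_noAtoms : NoAtoms m
  m_fullSupport : ∀ U : Set X, IsOpen U → U.Nonempty → m U ≠ 0
  /-- the localizing ring `ℰ` -/
  ring : Set (Set X)
  ring_mble : ∀ E ∈ ring, MeasurableSet E
  ring_fin : ∀ E ∈ ring, m E ≠ ∞
  ring_union : ∀ ⦃E F : Set X⦄, E ∈ ring → F ∈ ring → E ∪ F ∈ ring
  ring_ideal : ∀ ⦃E A : Set X⦄, E ∈ ring → MeasurableSet A → A ∩ E ∈ ring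
  ring_nhds : ∀ x : X, ∃ U ∈ ring, U ∈ nhds x
  /-- the core: a subalgebra of continuous bounded `ℰ`-eventually vanishing functions -/
  D0 : Set (X → ℝ)
  D0_cont : ∀ f ∈ D0, Continuous f
  D0_bdd : ∀ f ∈ D0, ∃ C : ℝ, ∀ x, |f x| ≤ C
  D0_supp : ∀ f ∈ D0, ∃ E ∈ ring, ∀ x, x ∉ E → f x = 0
  D0_add : ∀ ⦃f g⦄, f ∈ D0 → g ∈ D0 → (fun x => f x + g x) ∈ D0
  D0_mul : ∀ ⦃f g⦄, f ∈ D0 → g ∈ D0 → (fun x => f x * g x) ∈ D0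
  D0_smul : ∀ (c : ℝ) ⦃f⦄, f ∈ D0 → (fun x => c * f x) ∈ D0
  /-- the square field operator on the core -/
  Γ : (X → ℝ) → (X → ℝ) → X → ℝ
  Γ_symm : ∀ f g, Γ f g = Γ g f
  Γ_nonneg : ∀ f ∈ D0, ∀ x : X, 0 ≤ Γ f f x
  /-- domain of the closure of the pre-Dirichlet form -/
  domE : Set (X → ℝ)
  domE_L2 : ∀ f ∈ domE, MemLp f 2 m
  D0_sub_domE : D0 ⊆ domE
  /-- the Dirichlet form (closure of `(f,g) ↦ ∫ Γ(f,g) dm` on `D0`) -/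
  ℰform : (X → ℝ) → (X → ℝ) → ℝ
  ℰform_core : ∀ f ∈ D0, ∀ g ∈ D0, ℰform f g = ∫ x, Γ f g x ∂m
  /-- the broad local domain of the form -/
  domEloc : Set (X → ℝ)
  domE_sub_loc : domE ⊆ domEloc
  /-- carré du champ of the closed form (extended to the broad local domain) -/
  CdC : (X → ℝ) → (X → ℝ) → X → ℝ
  CdC_core : ∀ f ∈ D0, CdC f f =ᵐ[m] Γ f f
  CdC_int : ∀ f ∈ domE, ∀ g ∈ domE, ℰform f g = ∫ x, CdC f g x ∂m
  /-- the generator -/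
  domL : Set (X → ℝ)
  domL_sub : domL ⊆ domE
  L : (X → ℝ) → X → ℝ
  ibp : ∀ f ∈ domE, ∀ g ∈ domL, ℰform f g = -∫ x, f x * L g x ∂m
  /-- the semigroup (acting on representatives) -/
  T : ℝ → (X → ℝ) → X → ℝ
  T_zero : ∀ f, T 0 f = f
  T_sg : ∀ ⦃s t : ℝ⦄, 0 ≤ s → 0 ≤ t → ∀ f, T (s + t) f =ᵐ[m] fun x => T s (T t f) x
  T_linear : ∀ t, 0 ≤ t → ∀ (a b : ℝ) (f g : X → ℝ),
    T t (fun x => a * f x + b * g x) =ᵐ[m] fun x => a * T t f x + b * T t g x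
  T_symm : ∀ t, 0 ≤ t → ∀ f g : X → ℝ, MemLp f 2 m → MemLp g 2 m →
    ∫ x, T t f x * g x ∂m = ∫ x, f x * T t g x ∂m
  T_markov : ∀ t, 0 ≤ t → ∀ f : X → ℝ, (∀ x, 0 ≤ f x ∧ f x ≤ 1) →
    ∀ᵐ x ∂m, 0 ≤ T t f x ∧ T t f x ≤ 1

variable {X}

/-- `f^⋆ γ = ∫ f dγ`, the pairing of a function on `X` with a configuration `γ`. -/
def starMap (f : X → ℝ) : Measure X → ℝ := fun γ => ∫ x, f x ∂γ

/-- The vague σ-algebra `𝒜_v(ℰ)` on the configuration space, generated by the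
evaluations `γ ↦ γ E`, `E ∈ ℰ`. -/
def vagueSigma (ring : Set (Set X)) : MeasurableSpace (Measure X) :=
  MeasurableSpace.generateFrom
    {S | ∃ E ∈ ring, ∃ B : Set ℝ≥0∞, MeasurableSet B ∧ S = {γ : Measure X | γ E ∈ B}}

/-- The Mecke identity, characterizing the Poisson measure with intensity `m`. -/
def MeckeId (m : Measure X) (π : Measure (Measure X)) : Prop :=
  ∀ u : Measure X → X → ℝ≥0∞, Measurable (Function.uncurry u) →
    ∫⁻ γ, ∫⁻ x, u γ x ∂γ ∂π = ∫⁻ γ, ∫⁻ x, u (γ + Measure.dirac x) x ∂m ∂π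

/-- The Poisson (random) measure over a TLDS `𝔛`: a Borel probability measure on the
configuration space (modelled as point measures on `X`), characterized by the Mecke
identity. -/
structure PoissonMeasure (𝔛 : TLDS X) where
  π : Measure (Measure X)
  prob : IsProbabilityMeasure π
  ae_pointMeasure : ∀ᵐ γ ∂π, ∃ (x : ℕ → X) (c : ℕ → ℕ),
    γ = Measure.sum fun i => (c i : ℝ≥0∞) • Measure.dirac (x i)
  ae_locallyFinite : ∀ᵐ γ ∂π, ∀ E ∈ 𝔛.ring, γ E ≠ ∞
  mecke : MeckeId 𝔛.m π

/-- The heat-kernel measures `h^X_t(x, ·)` representing the semigroup `T^X_t`. -/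
structure HeatKernel (𝔛 : TLDS X) where
  h : ℝ → X → Measure X
  h_zero : ∀ x, h 0 x = Measure.dirac x
  h_meas : ∀ t, Measurable (h t)
  h_subprob : ∀ t, 0 ≤ t → ∀ x, h t x Set.univ ≤ 1
  h_represents : ∀ t, 0 < t → ∀ f : X → ℝ, MemLp f 2 𝔛.m →
    𝔛.T t f =ᵐ[𝔛.m] fun x => ∫ y, f y ∂(h t x)

/-- `(F)`: the `L^∞(m)`-to-`C_b(𝒯)` Feller property of the heat kernel. -/
def FellerProp (𝔛 : TLDS X) (H : HeatKernel 𝔛) : Prop :=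
  ∀ t : ℝ, 0 < t → ∀ A : Set X, MeasurableSet A → Continuous fun x => (H.h t x A).toReal

/-- `(F_ℰ)`: the `𝒜_b(ℰ)`-to-`C_∞(ℰ)` Feller property: `h_t(·,E)` vanishes at
`ℰ`-infinity for every `E ∈ ℰ`. -/
def FellerEProp (𝔛 : TLDS X) (H : HeatKernel 𝔛) : Prop :=
  ∀ t : ℝ, 0 < t → ∀ E ∈ 𝔛.ring, ∀ ε : ℝ, 0 < ε →
    ∃ F ∈ 𝔛.ring, ∀ x, x ∉ F → H.h t x E < ENNReal.ofReal ε

/-- `(SC)`: stochastic completeness. -/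
def StochCompleteProp (𝔛 : TLDS X) (H : HeatKernel 𝔛) : Prop :=
  ∀ t : ℝ, 0 < t → ∀ x : X, H.h t x Set.univ = 1

/-- The condition `(SCF)`: stochastic completeness and the Feller properties. -/
def SCF (𝔛 : TLDS X) (H : HeatKernel 𝔛) : Prop :=
  FellerProp 𝔛 H ∧ FellerEProp 𝔛 H ∧ StochCompleteProp 𝔛 H

/-- Infinite products of probability measures on `X`, characterized on cylinder sets. -/
structure InfProduct (X : Type) [MeasurableSpace X] where
  prodMeas : (ℕ → Measure X) → Measure (ℕ → X)
  prodMeas_cyl : ∀ μ : ℕ → Measure X, (∀ i, IsProbabilityMeasure (μ i)) →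
    ∀ (n : ℕ) (A : ℕ → Set X), (∀ i, MeasurableSet (A i)) →
      prodMeas μ {y : ℕ → X | ∀ i < n, y i ∈ A i} = ∏ i ∈ Finset.range n, μ i (A i)

/-- The set `𝐗^(∞)_lcf(ℰ)` of `ℰ`-locally finite sequences in `X`. -/
def lcfSet (ring : Set (Set X)) : Set (ℕ → X) :=
  {x : ℕ → X | ∀ E ∈ ring, {i : ℕ | x i ∈ E}.Finite}

/-- The labelling map `𝔏 : 𝐗^(∞) → Υ`, `𝔏(𝐱) = Σᵢ δ_{xᵢ}`. -/
def label : (ℕ → X) → Measure X := fun x => Measure.sum fun i => Measure.dirac (x i)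

/-- The infinite-product heat kernel `h^⊗∞_t(𝐱, ·) = ⊗ᵢ h^X_t(xᵢ, ·)`. -/
def hProd {𝔛 : TLDS X} (H : HeatKernel 𝔛) (IP : InfProduct X) (t : ℝ) (x : ℕ → X) :
    Measure (ℕ → X) :=
  IP.prodMeas fun i => H.h t (x i)


section Aux

variable {X : Type} [MeasurableSpace X]

/-- rectangular cylinder sets -/
def cylSet (X : Type) [MeasurableSpace X] : Set (Set (ℕ → X)) :=
  {S | ∃ (n : ℕ) (A : ℕ → Set X), (∀ i, MeasurableSet (A i)) ∧
    S = {y : ℕ → X | ∀ i < n, y i ∈ A i}}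

lemma cylSet_measurable {S : Set (ℕ → X)} (hS : S ∈ cylSet X) : MeasurableSet S := by
  obtain ⟨n, A, hA, rfl⟩ := hS
  have : {y : ℕ → X | ∀ i < n, y i ∈ A i}
      = ⋂ i ∈ Finset.range n, (fun y : ℕ → X => y i) ⁻¹' A i := by
    ext y; simp [Finset.mem_range]
  rw [this]
  exact MeasurableSet.biInter (Finset.range n).countable_toSet
    fun i _ => (measurable_pi_apply i) (hA i)

lemma isPiSystem_cylSet : IsPiSystem (cylSet X) := by
  rintro S ⟨n, A, hA, rfl⟩ T ⟨m, B, hB, rfl⟩ -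
  refine ⟨max n m, fun i => (if i < n then A i else univ) ∩ (if i < m then B i else univ),
    fun i => ?_, ?_⟩
  · apply MeasurableSet.inter <;> split_ifs <;> simp [hA, hB]
  · ext y
    simp only [mem_inter_iff, mem_setOf_eq]
    constructor
    · rintro ⟨h1, h2⟩ i hi
      constructor <;> split_ifs with h <;> simp [h1 i, h2 i, h]
    · intro h
      constructor <;> intro i hi
      · have := (h i (lt_of_lt_of_le hi (le_max_left n m))).1
        rwa [if_pos hi] at this
      · have := (h i (lt_of_lt_of_le hi (le_max_right n m))).2
        rwa [if_pos hi] at this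

lemma generateFrom_cylSet :
    MeasurableSpace.generateFrom (cylSet X) = (MeasurableSpace.pi : MeasurableSpace (ℕ → X)) := by
  refine le_antisymm (MeasurableSpace.generateFrom_le fun S hS => cylSet_measurable hS) ?_
  have hev : ∀ i : ℕ, @Measurable (ℕ → X) X (MeasurableSpace.generateFrom (cylSet X)) _
      (fun y => y i) := by
    intro i A hA
    apply MeasurableSpace.measurableSet_generateFrom
    refine ⟨i + 1, fun j => if j = i then A else univ, fun j => ?_, ?_⟩
    · dsimp only; split_ifs <;> simp [hA]
    · ext y
      simp only [mem_preimage, mem_setOf_eq]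
      constructor
      · intro h j _; split_ifs with hj; · subst hj; exact h
        · trivial
      · intro h
        have := h i (Nat.lt_succ_self i)
        rwa [if_pos rfl] at this
  rw [show (MeasurableSpace.pi : MeasurableSpace (ℕ → X)) =
      ⨆ i : ℕ, MeasurableSpace.comap (fun y : ℕ → X => y i) ‹MeasurableSpace X› from rfl]
  exact iSup_le fun i => (hev i).comap_le

lemma prodMeas_univ (IP : InfProduct X) (μ : ℕ → Measure X)
    (hμ : ∀ i, IsProbabilityMeasure (μ i)) : IP.prodMeas μ univ = 1 := by
  have := IP.prodMeas_cyl μ hμ 0 (fun _ => univ) (fun _ => MeasurableSet.univ)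
  simpa using this

lemma prodMeas_isProb (IP : InfProduct X) (μ : ℕ → Measure X)
    (hμ : ∀ i, IsProbabilityMeasure (μ i)) : IsProbabilityMeasure (IP.prodMeas μ) :=
  ⟨prodMeas_univ IP μ hμ⟩

lemma prodMeas_map_perm (IP : InfProduct X) (μ : ℕ → Measure X)
    (hμ : ∀ i, IsProbabilityMeasure (μ i)) (σ : ℕ ≃ ℕ) :
    IP.prodMeas (fun i => μ (σ i)) =
      (IP.prodMeas μ).map (fun y : ℕ → X => fun i => y (σ i)) := by
  have hΦ : Measurable (fun y : ℕ → X => fun i => y (σ i)) :=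
    measurable_pi_lambda _ fun i => measurable_pi_apply (σ i)
  haveI : IsProbabilityMeasure (IP.prodMeas (fun i => μ (σ i))) :=
    prodMeas_isProb IP _ fun i => hμ (σ i)
  haveI : IsProbabilityMeasure (IP.prodMeas μ) := prodMeas_isProb IP μ hμ
  refine ext_of_generate_finite (cylSet X) generateFrom_cylSet.symm isPiSystem_cylSet
    (fun S hS => ?_) ?_
  · obtain ⟨n, A, hA, rfl⟩ := hS
    rw [Measure.map_apply hΦ (cylSet_measurable ⟨n, A, hA, rfl⟩)]
    set m : ℕ := (Finset.range n).sup (fun i => σ i + 1) with hm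
    set B : ℕ → Set X := fun j => if h : σ.symm j < n then A (σ.symm j) else univ with hB
    have hBm : ∀ j, MeasurableSet (B j) := by
      intro j; rw [hB]; dsimp only; split_ifs <;> simp [hA]
    have hset : (fun y : ℕ → X => fun i => y (σ i)) ⁻¹' {y | ∀ i < n, y i ∈ A i}
        = {y : ℕ → X | ∀ j < m, y j ∈ B j} := by
      ext y
      simp only [mem_preimage, mem_setOf_eq]
      constructor
      · intro h j hj
        rw [hB]; dsimp only; split_ifs with hlt
        · have := h (σ.symm j) hlt
          rwa [Equiv.apply_symm_apply] at this
        · trivial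
      · intro h i hi
        have hj : σ i < m := by
          have : σ i + 1 ≤ m := Finset.le_sup (f := fun i => σ i + 1) (Finset.mem_range.mpr hi)
          omega
        have := h (σ i) hj
        rw [hB] at this; dsimp only at this
        rw [dif_pos (show σ.symm (σ i) < n by rwa [Equiv.symm_apply_apply])] at this
        rwa [Equiv.symm_apply_apply] at this
    rw [hset, IP.prodMeas_cyl μ hμ m B hBm,
      IP.prodMeas_cyl _ (fun i => hμ (σ i)) n A hA]
    have hsub : (Finset.range n).image σ ⊆ Finset.range m := by
      intro j hj
      obtain ⟨i, hi, rfl⟩ := Finset.mem_image.mp hj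
      have : σ i + 1 ≤ m := Finset.le_sup (f := fun i => σ i + 1) hi
      exact Finset.mem_range.mpr (by omega)
    rw [← Finset.prod_subset hsub (fun j _ hj => ?_)]
    · rw [Finset.prod_image (fun a _ b _ h => σ.injective h)]
      refine Finset.prod_congr rfl fun i hi => ?_
      rw [hB]; dsimp only
      rw [dif_pos]
      · rw [Equiv.symm_apply_apply]
      · rw [Equiv.symm_apply_apply]; exact Finset.mem_range.mp hi
    · have : ¬ σ.symm j < n := by
        intro hlt
        exact hj (Finset.mem_image.mpr ⟨σ.symm j, Finset.mem_range.mpr hlt,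
          Equiv.apply_symm_apply σ j⟩)
      rw [hB]; dsimp only
      rw [dif_neg this]
      exact (hμ j).measure_univ
  · simp [Measure.map_apply hΦ MeasurableSet.univ, measure_univ]

lemma label_comp_perm (σ : ℕ ≃ ℕ) (y : ℕ → X) :
    label (fun i => y (σ i)) = label y := by
  unfold label
  ext s hs
  rw [Measure.sum_apply _ hs, Measure.sum_apply _ hs]
  exact σ.tsum_eq fun i => Measure.dirac (y i) s

lemma label_singleton (x : ℕ → X) (a : X) (ha : MeasurableSet ({a} : Set X))
    (hfin : {i | x i = a}.Finite) :
    label x {a} = (hfin.toFinset.card : ℝ≥0∞) := by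
  unfold label
  rw [Measure.sum_apply _ ha]
  have : ∀ i : ℕ, Measure.dirac (x i) ({a} : Set X)
      = ({a} : Set X).indicator (1 : X → ℝ≥0∞) (x i) :=
    fun i => Measure.dirac_apply' (x i) ha
  simp_rw [this]
  rw [tsum_eq_sum (s := hfin.toFinset) (fun i hi => ?_)]
  · rw [Finset.sum_congr rfl (fun i hi => ?_), Finset.sum_const, nsmul_eq_mul, mul_one]
    have : x i = a := by simpa using hi
    simp [Set.indicator_of_mem, this]
  · have : x i ≠ a := by simpa using hi
    exact Set.indicator_of_notMem (by simpa using this) _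

lemma exists_perm (x₁ x₂ : ℕ → X)
    (hfin₁ : ∀ a : X, {i | x₁ i = a}.Finite) (hfin₂ : ∀ a : X, {i | x₂ i = a}.Finite)
    (hsing : ∀ a : X, MeasurableSet ({a} : Set X))
    (hl : label x₁ = label x₂) :
    ∃ σ : ℕ ≃ ℕ, ∀ i, x₁ (σ i) = x₂ i := by
  have hcard : ∀ a : X, Nat.card {i // x₂ i = a} = Nat.card {i // x₁ i = a} := by
    intro a
    have h1 := label_singleton x₁ a (hsing a) (hfin₁ a)
    have h2 := label_singleton x₂ a (hsing a) (hfin₂ a)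
    have : ((hfin₁ a).toFinset.card : ℝ≥0∞) = ((hfin₂ a).toFinset.card : ℝ≥0∞) := by
      rw [← h1, ← h2, hl]
    have hc : (hfin₁ a).toFinset.card = (hfin₂ a).toFinset.card := by exact_mod_cast this
    have e1 : Nat.card {i // x₁ i = a} = (hfin₁ a).toFinset.card := by
      rw [show {i // x₁ i = a} = ↥{i | x₁ i = a} from rfl, Nat.card_coe_set_eq,
        Set.ncard_eq_toFinset_card _ (hfin₁ a)]
    have e2 : Nat.card {i // x₂ i = a} = (hfin₂ a).toFinset.card := by
      rw [show {i // x₂ i = a} = ↥{i | x₂ i = a} from rfl, Nat.card_coe_set_eq,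
        Set.ncard_eq_toFinset_card _ (hfin₂ a)]
    rw [e1, e2, hc]
  have hfinT : ∀ a : X, Finite {i // x₂ i = a} := fun a => (hfin₂ a).to_subtype
  have hfinS : ∀ a : X, Finite {i // x₁ i = a} := fun a => (hfin₁ a).to_subtype
  have he : ∀ a : X, Nonempty ({i // x₂ i = a} ≃ {i // x₁ i = a}) := by
    intro a
    haveI := hfinT a; haveI := hfinS a
    exact Finite.card_eq.mp (hcard a)
  let e : ∀ a : X, {i // x₂ i = a} ≃ {i // x₁ i = a} := fun a => (he a).some
  exact ⟨Equiv.ofFiberEquiv e, fun i => Equiv.ofFiberEquiv_map e i⟩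

lemma label_measurable (R : Set (Set X)) (hR : ∀ E ∈ R, MeasurableSet E) :
    @Measurable (ℕ → X) (Measure X) _ (vagueSigma R) label := by
  apply measurable_generateFrom
  rintro S ⟨E, hE, B, hB, rfl⟩
  have hfun : (fun y : ℕ → X => label y E)
      = fun y : ℕ → X => ∑' i, E.indicator (1 : X → ℝ≥0∞) (y i) := by
    funext y
    unfold label
    rw [Measure.sum_apply _ (hR E hE)]
    exact tsum_congr fun i => Measure.dirac_apply' (y i) (hR E hE)
  have hmeas : Measurable fun y : ℕ → X => label y E := by
    rw [hfun]
    exact Measurable.ennreal_tsum fun i =>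
      (measurable_one.indicator (hR E hE)).comp (measurable_pi_apply i)
  exact hmeas hB

end Aux

/-- **Well-posedness of the lifted heat kernel** (Lemma `l:CoincidenceHK`).
Let `(𝔛,Γ)` be a TLDS satisfying `(F)` and `(SC)`. Then for every infinite configuration
`γ ∈ Υ^(∞)`, every `t ≥ 0` and any two labelings `𝐱₁, 𝐱₂ ∈ 𝔏⁻¹(γ)`, the pushforward
measures `𝔏_♯ h^⊗∞_t(𝐱₁, ·)` and `𝔏_♯ h^⊗∞_t(𝐱₂, ·)` coincide as measures on
`(Υ, 𝒜_v(ℰ))`. -/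
theorem pushforward_product_kernel_well_defined
    (X : Type) [TopologicalSpace X] [MeasurableSpace X] [BorelSpace X]
    [TopologicalSpace.MetrizableSpace X] [SecondCountableTopology X]
    (𝔛 : TLDS X) (H : HeatKernel 𝔛)
    (hF : FellerProp 𝔛 H) (hSC : StochCompleteProp 𝔛 H) (IP : InfProduct X)
    (γ : Measure X) (hγ : γ Set.univ = ∞)
    (t : ℝ) (ht : 0 ≤ t)
    (x₁ x₂ : ℕ → X) (hx₁ : x₁ ∈ lcfSet 𝔛.ring) (hx₂ : x₂ ∈ lcfSet 𝔛.ring)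
    (hl₁ : label x₁ = γ) (hl₂ : label x₂ = γ) :
    ∀ Λ : Set (Measure X), MeasurableSet[vagueSigma 𝔛.ring] Λ →
      hProd H IP t x₁ (label ⁻¹' Λ) = hProd H IP t x₂ (label ⁻¹' Λ) := by
  classical
  intro Λ hΛ
  have hsing : ∀ a : X, MeasurableSet ({a} : Set X) := fun a =>
    (isClosed_singleton (x := a)).measurableSet
  have hfib : ∀ x : ℕ → X, x ∈ lcfSet 𝔛.ring → ∀ a : X, {i | x i = a}.Finite := by
    intro x hx a
    obtain ⟨U, hU, hnh⟩ := 𝔛.ring_nhds a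
    exact (hx U hU).subset fun i hi => by
      have : x i = a := hi
      rw [mem_setOf_eq, this]; exact mem_of_mem_nhds hnh
  obtain ⟨σ, hσ⟩ := exists_perm x₁ x₂ (hfib x₁ hx₁) (hfib x₂ hx₂) hsing
    (hl₁.trans hl₂.symm)
  have hprob : ∀ x : ℕ → X, ∀ i : ℕ, IsProbabilityMeasure (H.h t (x i)) := by
    intro x i
    rcases ht.eq_or_lt with h | h
    · rw [← h, H.h_zero]; infer_instance
    · exact ⟨hSC t h (x i)⟩
  have hLmeas : MeasurableSet (label ⁻¹' Λ) :=
    label_measurable 𝔛.ring 𝔛.ring_mble hΛ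
  have hΦ : Measurable (fun y : ℕ → X => fun i => y (σ i)) :=
    measurable_pi_lambda _ fun i => measurable_pi_apply (σ i)
  have hfun : (fun i => H.h t (x₂ i)) = fun i => H.h t (x₁ (σ i)) :=
    funext fun i => by rw [hσ i]
  have hinv : (fun y : ℕ → X => fun i => y (σ i)) ⁻¹' (label ⁻¹' Λ) = label ⁻¹' Λ := by
    ext y
    simp only [mem_preimage]
    rw [label_comp_perm σ y]
  symm
  calc hProd H IP t x₂ (label ⁻¹' Λ)
      = IP.prodMeas (fun i => H.h t (x₁ (σ i))) (label ⁻¹' Λ) := by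
        unfold hProd; rw [hfun]
    _ = ((IP.prodMeas (fun i => H.h t (x₁ i))).map
          (fun y : ℕ → X => fun i => y (σ i))) (label ⁻¹' Λ) := by
        rw [prodMeas_map_perm IP (fun i => H.h t (x₁ i)) (hprob x₁) σ]
    _ = IP.prodMeas (fun i => H.h t (x₁ i))
          ((fun y : ℕ → X => fun i => y (σ i)) ⁻¹' (label ⁻¹' Λ)) := by
        rw [Measure.map_apply hΦ hLmeas]
    _ = hProd H IP t x₁ (label ⁻¹' Λ) := by rw [hinv]; rfl


end Config2
end
end

section
/- Let (X,d) be a metric space. For sequences 𝐱=(x_i)_{i∈ℕ}, 𝐲=(y_i)_{i∈ℕ} ∈ X^ℕ define the extended distance d_∞(𝐱,𝐲) := (Σ_{i=1}^∞ d(x_i,y_i)²)^{1/2} ∈ [0,∞]. Suppose d_∞(𝐱,𝐲) < ∞, and for each n ∈ ℕ let A_n := B̄_{2^{−n}}(y₁) × ⋯ × B̄_{2^{−n}}(y_n) × X × X × ⋯ ⊆ X^ℕ, where B̄_r(y) is the closed ball of radius r about y. Then lim_{n→∞} inf_{𝐳∈A_n} d_∞(𝐱,𝐳) = d_∞(𝐱,𝐲).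 -/
/-!
Write `d_s(x, y)` for the `ℓ²` distance of `x` and `y` over the finite set `s` of coordinates.
For `z ∈ A_n`, Minkowski's inequality in the first `n` coordinates gives
`d_{<n}(x, y) ≤ d_{<n}(x, z) + d_{<n}(z, y) ≤ d_∞(x, z) + √n · 2⁻ⁿ`, so the infimum over `A_n`
lies between `d_{<n}(x, y) - √n · 2⁻ⁿ` and `d_∞(x, y)` (as `y ∈ A_n`), and both bounds tend
to `d_∞(x, y)`.
-/

open MeasureTheory Filter Set
open scoped ENNReal NNReal Topology

noncomputable section

namespace Config2

/-- The `ℓ²`-type extended distance on sequences: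
`d_∞(𝐱,𝐲) = (Σᵢ d(xᵢ,yᵢ)²)^{1/2} ∈ [0,∞]`. -/
def dInfty {X : Type} [MetricSpace X] (x y : ℕ → X) : ℝ≥0∞ :=
  (∑' i, ENNReal.ofReal (dist (x i) (y i) ^ 2)) ^ (1 / 2 : ℝ)

section PartialDist

variable {X : Type*} [PseudoMetricSpace X]

def partialDist (s : Finset ℕ) (x y : ℕ → X) : ℝ≥0∞ :=
  (∑ i ∈ s, ENNReal.ofReal (dist (x i) (y i) ^ 2)) ^ (1 / 2 : ℝ)

lemma ofReal_dist_sq (a b : X) : ENNReal.ofReal (dist a b ^ 2) = edist a b ^ (2 : ℝ) := by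
  rw [edist_dist, ENNReal.ofReal_rpow_of_nonneg dist_nonneg zero_le_two, Real.rpow_two]

lemma partialDist_triangle (s : Finset ℕ) (x y z : ℕ → X) :
    partialDist s x y ≤ partialDist s x z + partialDist s z y := by
  simp only [partialDist, ofReal_dist_sq]
  calc (∑ i ∈ s, edist (x i) (y i) ^ (2 : ℝ)) ^ (1 / 2 : ℝ)
      ≤ (∑ i ∈ s, (edist (x i) (z i) + edist (z i) (y i)) ^ (2 : ℝ)) ^ (1 / 2 : ℝ) := by
        gcongr with i
        exact edist_triangle _ _ _
    _ ≤ _ := ENNReal.Lp_add_le s _ _ one_le_two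

lemma partialDist_le_of_forall_dist_le {s : Finset ℕ} {x y : ℕ → X} {r : ℝ} (hr : 0 ≤ r)
    (h : ∀ i ∈ s, dist (x i) (y i) ≤ r) :
    partialDist s x y ≤ ENNReal.ofReal (√(s.card : ℝ) * r) := by
  have hsum : ∑ i ∈ s, ENNReal.ofReal (dist (x i) (y i) ^ 2) ≤
      ENNReal.ofReal (s.card * r ^ 2) :=
    calc ∑ i ∈ s, ENNReal.ofReal (dist (x i) (y i) ^ 2)
        ≤ ∑ _i ∈ s, ENNReal.ofReal (r ^ 2) := by
          gcongr with i hi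
          exact h i hi
      _ = ENNReal.ofReal (s.card * r ^ 2) := by
          rw [Finset.sum_const, nsmul_eq_mul, ENNReal.ofReal_mul (Nat.cast_nonneg _),
            ENNReal.ofReal_natCast]
  calc partialDist s x y ≤ ENNReal.ofReal (s.card * r ^ 2) ^ (1 / 2 : ℝ) :=
        ENNReal.rpow_le_rpow hsum (by norm_num)
    _ = ENNReal.ofReal (√(s.card : ℝ) * r) := by
        rw [ENNReal.ofReal_rpow_of_nonneg (by positivity) (by norm_num), ← Real.sqrt_eq_rpow,
          Real.sqrt_mul (Nat.cast_nonneg _), Real.sqrt_sq hr]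

end PartialDist

section

variable {X : Type} [MetricSpace X]

lemma partialDist_le_dInfty (s : Finset ℕ) (x y : ℕ → X) : partialDist s x y ≤ dInfty x y := by
  unfold partialDist dInfty
  gcongr
  exact ENNReal.sum_le_tsum s

lemma tendsto_partialDist_range (x y : ℕ → X) :
    Tendsto (fun n => partialDist (Finset.range n) x y) atTop (𝓝 (dInfty x y)) :=
  ((ENNReal.continuous_rpow_const).tendsto _).comp (ENNReal.tendsto_nat_tsum _)

lemma partialDist_le_dInfty_add {s : Finset ℕ} {x y z : ℕ → X} {r : ℝ} (hr : 0 ≤ r)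
    (hz : ∀ i ∈ s, dist (z i) (y i) ≤ r) :
    partialDist s x y ≤ dInfty x z + ENNReal.ofReal (√(s.card : ℝ) * r) :=
  (partialDist_triangle s x y z).trans <|
    add_le_add (partialDist_le_dInfty s x z) (partialDist_le_of_forall_dist_le hr hz)

end

lemma tendsto_sqrt_mul_two_zpow_neg :
    Tendsto (fun n : ℕ => √(n : ℝ) * (2 : ℝ) ^ (-(n : ℤ))) atTop (𝓝 0) := by
  refine squeeze_zero (fun n => by positivity) (fun n => ?_)
    (tendsto_self_mul_const_pow_of_lt_one (r := 1 / 2) (by norm_num) (by norm_num))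
  rw [zpow_neg, zpow_natCast, one_div, inv_pow]
  gcongr
  exact Real.sqrt_le_self_iff.mpr (by rcases n with _ | n <;> simp)

theorem dInfty_tendsto_of_shrinking_cylinders_general
    {X : Type} [MetricSpace X] (x y : ℕ → X)
    (A : ℕ → Set (ℕ → X))
    (hA : ∀ n, A n = {z : ℕ → X | ∀ i < n, z i ∈ Metric.closedBall (y i) ((2 : ℝ) ^ (-(n : ℤ)))}) :
    Tendsto (fun n => ⨅ z ∈ A n, dInfty x z) atTop (nhds (dInfty x y)) := by
  set ε : ℕ → ℝ≥0∞ := fun n => ENNReal.ofReal (√(n : ℝ) * (2 : ℝ) ^ (-(n : ℤ)))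
  have hlower : ∀ n, partialDist (Finset.range n) x y - ε n ≤ ⨅ z ∈ A n, dInfty x z := by
    refine fun n => le_iInf₂ fun z hz => tsub_le_iff_right.mpr ?_
    rw [hA n] at hz
    simpa only [Finset.card_range] using partialDist_le_dInfty_add (x := x) (by positivity)
      (fun i hi => Metric.mem_closedBall.mp (hz i (Finset.mem_range.mp hi)))
  have hupper : ∀ n, ⨅ z ∈ A n, dInfty x z ≤ dInfty x y := fun n =>
    iInf₂_le y (by simp [hA n])
  have hε : Tendsto ε atTop (𝓝 0) :=
    ENNReal.ofReal_zero ▸ ENNReal.tendsto_ofReal tendsto_sqrt_mul_two_zpow_neg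
  refine tendsto_of_tendsto_of_tendsto_of_le_of_le ?_ tendsto_const_nhds hlower hupper
  simpa using ENNReal.Tendsto.sub (tendsto_partialDist_range x y) hε (Or.inr ENNReal.zero_ne_top)

/-- **Approximation of `d_∞` by distances to shrinking cylinders** (Lemma `l:AuxStoL`).
Let `(X,d)` be a metric space and `𝐱, 𝐲 ∈ X^ℕ` with `d_∞(𝐱,𝐲) < ∞`. For `n ∈ ℕ` let
`A_n := B̄_{2^{-n}}(y₁) × ⋯ × B̄_{2^{-n}}(y_n) × X × X × ⋯`. Then
`lim_n inf_{𝐳 ∈ A_n} d_∞(𝐱,𝐳) = d_∞(𝐱,𝐲)`. -/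
theorem dInfty_tendsto_of_shrinking_cylinders
    {X : Type} [MetricSpace X] (x y : ℕ → X) (hxy : dInfty x y ≠ ∞)
    (A : ℕ → Set (ℕ → X))
    (hA : ∀ n, A n = {z : ℕ → X | ∀ i < n, z i ∈ Metric.closedBall (y i) ((2 : ℝ) ^ (-(n : ℤ)))}) :
    Tendsto (fun n => ⨅ z ∈ A n, dInfty x z) atTop (nhds (dInfty x y)) :=
  dInfty_tendsto_of_shrinking_cylinders_general x y A hA

end Config2
end
end
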